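/- arXiv:2503.19696 — 3 statements merged into one kernel-verified Lean document; each statement's English description precedes it below -/
import Mathlib

section
/- For every integer i≥0, every integer j, and every n∈ℕ: (i) f_{i,j}(n) + 1 = f_{i,j−1}(n); (ii) f_{i,0}(a(n)) + 1 = f_{i+1,F(i+1)−1}(n); (iii) f_{i,0}(b(n)) + 1 = f_{i,F(i+2)−1}(b(n)+1); (iv) f_{i+1,0}(n) + 1 = f_{i,F(i+2)−1}(a(n)+1). -/
/-- The golden ratio φ = (1 + √5)/2. -/
noncomputable def phi : ℝ := (1 + Real.sqrt 5) / 2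

/-- The lower Wythoff sequence a(n) = ⌊nφ⌋. -/
noncomputable def wa (n : ℕ) : ℕ := ⌊(n : ℝ) * phi⌋₊

/-- The upper Wythoff sequence b(n) = ⌊nφ²⌋. -/
noncomputable def wb (n : ℕ) : ℕ := ⌊(n : ℝ) * phi ^ 2⌋₊

/-- f_{i,j}(n) = F(i+1)·a(n) + F(i)·n − j. -/
noncomputable def fij (i : ℕ) (j : ℤ) (n : ℕ) : ℤ :=
  (Nat.fib (i + 1) : ℤ) * wa n + (Nat.fib i : ℤ) * n - j

/-!
Write `θ = nφ - a(n) ∈ [0, 1)`, with `θ > 0` for `n > 0` since `φ` is irrational. From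
`φ² = φ + 1` one gets `a(n) φ = a(n) + n - θ (φ - 1)` and `b(n) = a(n) + n`, which pins down
`a(a(n))`, `a(a(n) + 1)`, `a(b(n))` and `a(b(n) + 1)` as linear combinations of `a(n)`, `n` and
`b(n)`. Each identity of the theorem then reduces to `F(i + 2) = F(i + 1) + F(i)`.
-/

open Real

lemma phi_eq_goldenRatio : phi = goldenRatio := rfl

lemma one_lt_phi : 1 < phi := one_lt_goldenRatio

lemma phi_lt_two : phi < 2 := goldenRatio_lt_two

lemma wa_eq_iff {k m : ℕ} : wa k = m ↔ (m : ℝ) ≤ k * phi ∧ k * phi < m + 1 :=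
  Nat.floor_eq_iff (by rw [phi_eq_goldenRatio]; positivity)

lemma wa_le_mul_phi (n : ℕ) : (wa n : ℝ) ≤ n * phi :=
  Nat.floor_le (by rw [phi_eq_goldenRatio]; positivity)

lemma mul_phi_lt_wa_add_one (n : ℕ) : n * phi < wa n + 1 :=
  Nat.lt_floor_add_one _

lemma wa_lt_mul_phi {n : ℕ} (hn : n ≠ 0) : (wa n : ℝ) < n * phi :=
  (wa_le_mul_phi n).lt_of_ne ((goldenRatio_irrational.natCast_mul hn).ne_nat (wa n)).symm

lemma wa_mul_phi (n : ℕ) : (wa n : ℝ) * phi = wa n + n - (n * phi - wa n) * (phi - 1) := by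
  rw [phi_eq_goldenRatio]
  linear_combination (n : ℝ) * goldenRatio_sq

lemma wb_eq_wa_add (n : ℕ) : wb n = wa n + n := by
  rw [wb, phi_eq_goldenRatio, goldenRatio_sq, mul_add, mul_one,
    Nat.floor_add_natCast (by positivity)]
  rfl

lemma wa_wa_add_one {n : ℕ} (hn : n ≠ 0) : wa (wa n) + 1 = wa n + n := by
  suffices wa (wa n) = wa n + (n - 1) by omega
  rw [wa_eq_iff, Nat.cast_add, Nat.cast_sub (Nat.one_le_iff_ne_zero.mpr hn), Nat.cast_one]
  constructor <;> nlinarith [wa_lt_mul_phi hn, mul_phi_lt_wa_add_one n, wa_mul_phi n,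
    one_lt_phi, phi_lt_two]

lemma wa_wa_add_one_add_one (n : ℕ) : wa (wa n + 1) = wa n + n + 1 := by
  rw [wa_eq_iff]
  push_cast
  constructor <;> nlinarith [wa_le_mul_phi n, mul_phi_lt_wa_add_one n, wa_mul_phi n,
    one_lt_phi, phi_lt_two]

lemma wa_wb (n : ℕ) : wa (wb n) = wa n + wb n := by
  rw [wa_eq_iff, wb_eq_wa_add]
  push_cast
  constructor <;> nlinarith [wa_le_mul_phi n, mul_phi_lt_wa_add_one n, wa_mul_phi n,
    one_lt_phi, phi_lt_two]

lemma wa_wb_add_one (n : ℕ) : wa (wb n + 1) = wa n + wb n + 1 := by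
  rw [wa_eq_iff, wb_eq_wa_add]
  push_cast
  constructor <;> nlinarith [wa_le_mul_phi n, mul_phi_lt_wa_add_one n, wa_mul_phi n,
    one_lt_phi, phi_lt_two]

lemma fij_add_one (i : ℕ) (j : ℤ) (n : ℕ) : fij i j n + 1 = fij i (j - 1) n := by
  unfold fij; ring

theorem stmt_4 (i : ℕ) (j : ℤ) (n : ℕ) (hn : 0 < n) :
    fij i j n + 1 = fij i (j - 1) n ∧
    fij i 0 (wa n) + 1 = fij (i + 1) ((Nat.fib (i + 1) : ℤ) - 1) n ∧
    fij i 0 (wb n) + 1 = fij i ((Nat.fib (i + 2) : ℤ) - 1) (wb n + 1) ∧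
    fij (i + 1) 0 n + 1 = fij i ((Nat.fib (i + 2) : ℤ) - 1) (wa n + 1) := by
  have hfib : (Nat.fib (i + 2) : ℤ) = Nat.fib (i + 1) + Nat.fib i := by
    rw [Nat.fib_add_two, Nat.cast_add, add_comm]
  have haa : (wa (wa n) : ℤ) + 1 = wa n + n := mod_cast wa_wa_add_one hn.ne'
  refine ⟨fij_add_one i j n, ?_, ?_, ?_⟩ <;> simp only [fij, hfib] <;> push_cast
  · linear_combination (Nat.fib (i + 1) : ℤ) * haa
  · rw [wa_wb, wa_wb_add_one]; push_cast; ring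
  · rw [wa_wa_add_one_add_one]; push_cast; ring
end

section
/- For every integer k≥3, the F(k) sets R_{i,j}, where i and j range over the integers with k−3≤i≤k−2 and 1−F(k)≤j≤−F(i+1), are pairwise disjoint and their union equals {n∈ℕ : n≥F(k)} (this is the k-th standard Fibonacci-like partition of the second kind). -/
/-- R_{i,j} = { f_{i,j}(n) : n ∈ ℕ, n ≥ 1 }. -/
def R (i : ℕ) (j : ℤ) : Set ℤ := {m | ∃ n : ℕ, 0 < n ∧ fij i j n = m}

/-- The index set of the k-th standard Fibonacci-like partition of the second kind:
pairs (i, j) with k−3 ≤ i ≤ k−2 and 1−F(k) ≤ j ≤ −F(i+1). -/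
def IdxSecond (k : ℕ) : Set (ℕ × ℤ) :=
  {p | k - 3 ≤ p.1 ∧ p.1 ≤ k - 2 ∧
       1 - (Nat.fib k : ℤ) ≤ p.2 ∧ p.2 ≤ -(Nat.fib (p.1 + 1) : ℤ)}

/-!
The Wythoff identities `a (a n) = a n + n - 1` and `a (a n + n) = 2 a n + n` turn `f i j` on the
lower and upper Wythoff sequences into `f (i + 1) (j + F (i + 1))` and `f (i + 2) j`. Rayleigh's
theorem splits the positive integers into the values of `a` and of `n ↦ a n + n`, and `f i j` is
injective, so `R i j` is the disjoint union of `R (i + 1) (j + F (i + 1))` and `R (i + 2) j`.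

Count, for each `x`, the members of the `k`-th family that contain `x`. Splitting every set of
the row `i = k - 3` and shifting everything by `F (k - 1)` turns the `k`-th family into the
`(k + 1)`-th one, so the count for `k + 1` at `x` equals the count for `k` at `x - F (k - 1)`.
For `k = 3` the family is `{a n + 1}`, `{a n + n + 1}`, and Rayleigh's theorem again gives the
count `[x ≥ 2]`. Hence the count is `[x ≥ F k]`, which is the claimed partition.
-/

open Finset Real
open Nat (fib fib_add_two)
open scoped goldenRatio symmDiff

theorem Finset.pairwiseDisjoint_and_biUnion_eq_of_sum_indicator {ι α : Type*} {t : Finset ι}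
    {S : ι → Set α} {T : Set α}
    (h : ∀ x, ∑ p ∈ t, (S p).indicator (1 : α → ℕ) x = T.indicator 1 x) :
    (t : Set ι).PairwiseDisjoint S ∧ ⋃ p ∈ (t : Set ι), S p = T := by
  classical
  have hT (x : α) : T.indicator (1 : α → ℕ) x ≤ 1 :=
    Set.indicator_apply_le' (fun _ => le_rfl) (fun _ => zero_le_one)
  refine ⟨fun p hp q hq hpq => Set.disjoint_left.2 fun x hxp hxq => ?_, ?_⟩
  · have h₂ := sum_le_sum_of_subset (f := fun p => (S p).indicator (1 : α → ℕ) x)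
      (insert_subset hp (singleton_subset_iff.2 hq))
    rw [sum_pair hpq, h, Set.indicator_of_mem hxp, Set.indicator_of_mem hxq] at h₂
    exact absurd (h₂.trans (hT x)) (by norm_num)
  · ext x
    simp only [Set.mem_iUnion, exists_prop, mem_coe]
    constructor
    · rintro ⟨p, hp, hx⟩
      by_contra hxT
      have h₁ := single_le_sum (f := fun p => (S p).indicator (1 : α → ℕ) x)
        (fun _ _ => Nat.zero_le _) hp
      rw [h, Set.indicator_of_notMem hxT, Set.indicator_of_mem hx] at h₁
      exact absurd h₁ (by norm_num)
    · intro hx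
      have hsum : ∑ p ∈ t, (S p).indicator (1 : α → ℕ) x ≠ 0 := by
        rw [h, Set.indicator_of_mem hx]
        exact one_ne_zero
      obtain ⟨p, hp, hpx⟩ := exists_ne_zero_of_sum_ne_zero hsum
      exact ⟨p, hp, Set.mem_of_indicator_ne_zero hpx⟩

theorem sum_Ioc_add {M : Type*} [AddCommMonoid M] (g : ℤ → M) (lo hi c : ℤ) :
    ∑ j ∈ Ioc lo hi, g (j + c) = ∑ j ∈ Ioc (lo + c) (hi + c), g j := by
  rw [← map_add_right_Ioc, sum_map]
  rfl

theorem setOf_int_pos_eq_setOf_nat_pos {α : Type*} (g : ℤ → α) :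
    {g k | k > 0} = {x | ∃ n : ℕ, 0 < n ∧ g n = x} := by
  ext x
  refine ⟨fun ⟨k, hk, hx⟩ => ⟨k.toNat, by omega, by rwa [Int.toNat_of_nonneg hk.le]⟩,
    fun ⟨n, hn, hx⟩ => ⟨n, by exact_mod_cast hn, hx⟩⟩

theorem indicator_Ici_sub (a c x : ℤ) :
    (Set.Ici a).indicator (1 : ℤ → ℕ) (x - c) = (Set.Ici (a + c)).indicator 1 x := by
  simp [Set.indicator_apply, le_sub_iff_add_le]

theorem holderConjugate_goldenRatio : Real.HolderConjugate φ (φ + 1) := by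
  rw [Real.holderConjugate_iff_eq_conjExponent one_lt_goldenRatio,
    eq_div_iff (sub_ne_zero.2 one_lt_goldenRatio.ne')]
  linear_combination goldenRatio_sq

theorem wa_eq_floor (n : ℕ) : wa n = ⌊(n : ℝ) * φ⌋₊ := rfl

theorem wa_bounds {n : ℕ} (hn : 0 < n) : (n : ℝ) * φ - 1 < wa n ∧ (wa n : ℝ) < n * φ := by
  have hne : (wa n : ℝ) ≠ n * φ := fun h =>
    (goldenRatio_irrational.natCast_mul hn.ne').ne_nat (wa n) h.symm
  rw [wa_eq_floor] at hne ⊢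
  exact ⟨by linarith [Nat.lt_floor_add_one ((n : ℝ) * φ)],
    (Nat.floor_le (by positivity)).lt_of_ne hne⟩

theorem wa_pos {n : ℕ} (hn : 0 < n) : 0 < wa n := by
  have h₁ : (1 : ℝ) ≤ n := by exact_mod_cast hn
  have h₀ : (0 : ℝ) < wa n := by nlinarith [(wa_bounds hn).1, one_lt_goldenRatio]
  exact_mod_cast h₀

theorem wa_strictMono : StrictMono wa := by
  refine strictMono_nat_of_lt_succ fun n => Nat.lt_of_add_one_le ?_
  rw [wa_eq_floor, wa_eq_floor, ← Nat.floor_add_one (by positivity)]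
  exact Nat.floor_le_floor (by push_cast; nlinarith [one_lt_goldenRatio])

theorem wa_eq_of_mul_eq {m n : ℕ} {t : ℝ} (h : (m : ℝ) * φ = n + t) (h₀ : 0 ≤ t) (h₁ : t < 1) :
    wa m = n := by
  rw [wa_eq_floor, Nat.floor_eq_iff (by positivity), h]
  constructor <;> linarith

theorem wa_wa {n : ℕ} (hn : 0 < n) : wa (wa n) + 1 = wa n + n := by
  obtain ⟨hlo, hhi⟩ := wa_bounds hn
  obtain ⟨k, rfl⟩ : ∃ k, n = k + 1 := ⟨n - 1, by omega⟩
  have := wa_eq_of_mul_eq (m := wa (k + 1)) (n := wa (k + 1) + k)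
    (t := 1 - ((k + 1 : ℕ) * φ - wa (k + 1)) * (φ - 1))
    (by push_cast; linear_combination (k + 1 : ℝ) * goldenRatio_sq)
    (by nlinarith [goldenRatio_lt_two]) (by nlinarith [one_lt_goldenRatio])
  omega

theorem wa_wa_add {n : ℕ} (hn : 0 < n) : wa (wa n + n) = 2 * wa n + n := by
  obtain ⟨hlo, hhi⟩ := wa_bounds hn
  exact wa_eq_of_mul_eq (t := (n * φ - wa n) * (2 - φ))
    (by push_cast; linear_combination (n : ℝ) * goldenRatio_sq)
    (by nlinarith [goldenRatio_lt_two]) (by nlinarith [one_lt_goldenRatio])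

theorem fij_zero_zero (n : ℕ) : fij 0 0 n = wa n := by simp [fij]

theorem fij_one_zero (n : ℕ) : fij 1 0 n = wa n + n := by simp [fij]

theorem natCast_wa (n : ℕ) : (wa n : ℤ) = beattySeq φ n := by
  rw [wa_eq_floor, beattySeq, Int.natCast_floor_eq_floor (by positivity), Int.cast_natCast]

theorem natCast_wa_add_self (n : ℕ) : (wa n + n : ℤ) = beattySeq (φ + 1) n := by
  rw [natCast_wa, beattySeq, beattySeq, mul_add_one, Int.floor_add_intCast]

theorem R_zero_zero_eq : R 0 0 = {beattySeq φ k | k > 0} := by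
  simp only [setOf_int_pos_eq_setOf_nat_pos, R, fij_zero_zero, natCast_wa]

theorem R_one_zero_eq : R 1 0 = {beattySeq (φ + 1) k | k > 0} := by
  simp only [setOf_int_pos_eq_setOf_nat_pos, R, fij_one_zero, natCast_wa_add_self]

theorem R_zero_zero_symmDiff_R_one_zero : R 0 0 ∆ R 1 0 = Set.Ici 1 := by
  rw [R_zero_zero_eq, R_one_zero_eq]
  exact Irrational.beattySeq_symmDiff_beattySeq_pos holderConjugate_goldenRatio
    goldenRatio_irrational

theorem R_zero_zero_union_R_one_zero : R 0 0 ∪ R 1 0 = Set.Ici 1 := by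
  refine (Set.union_subset ?_ ?_).antisymm
    (R_zero_zero_symmDiff_R_one_zero ▸ symmDiff_le_sup)
  · rintro _ ⟨n, hn, rfl⟩
    simpa [fij_zero_zero, Nat.one_le_iff_ne_zero] using (wa_pos hn).ne'
  · rintro _ ⟨n, hn, rfl⟩
    simp only [fij_one_zero, Set.mem_Ici]
    omega

theorem disjoint_R_zero_zero_R_one_zero : Disjoint (R 0 0) (R 1 0) := by
  rw [← symmDiff_eq_sup, R_zero_zero_symmDiff_R_one_zero, ← R_zero_zero_union_R_one_zero]; rfl

theorem fij_wa (i : ℕ) (j : ℤ) {n : ℕ} (hn : 0 < n) :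
    fij i j (wa n) = fij (i + 1) (j + fib (i + 1)) n := by
  have hw : (wa (wa n) : ℤ) + 1 = wa n + n := by exact_mod_cast wa_wa hn
  have hF : (fib (i + 2) : ℤ) = fib i + fib (i + 1) := by exact_mod_cast fib_add_two
  simp only [fij, hF]
  linear_combination (fib (i + 1) : ℤ) * hw

theorem fij_wa_add_self (i : ℕ) (j : ℤ) {n : ℕ} (hn : 0 < n) :
    fij i j (wa n + n) = fij (i + 2) j n := by
  have hw : (wa (wa n + n) : ℤ) = 2 * wa n + n := by exact_mod_cast wa_wa_add hn
  have hF₂ : (fib (i + 2) : ℤ) = fib i + fib (i + 1) := by exact_mod_cast fib_add_two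
  have hF₃ : (fib (i + 3) : ℤ) = fib (i + 1) + fib (i + 2) := by exact_mod_cast fib_add_two
  simp only [fij, hw, hF₃, hF₂]
  push_cast
  ring

theorem fij_strictMono (i : ℕ) (j : ℤ) : StrictMono (fij i j) := by
  intro m n hmn
  have hw : (wa m : ℤ) < wa n := by exact_mod_cast wa_strictMono hmn
  have hF : (0 : ℤ) < fib (i + 1) := by exact_mod_cast Nat.fib_pos.2 i.succ_pos
  have hn : (m : ℤ) ≤ n := by exact_mod_cast hmn.le
  have := mul_lt_mul_of_pos_left hw hF
  have := mul_le_mul_of_nonneg_left hn (Int.natCast_nonneg (fib i))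
  simp only [fij]
  linarith

theorem R_eq_union (i : ℕ) (j : ℤ) : R i j = R (i + 1) (j + fib (i + 1)) ∪ R (i + 2) j := by
  ext x
  constructor
  · rintro ⟨n, hn, rfl⟩
    have : (n : ℤ) ∈ R 0 0 ∪ R 1 0 := by
      rw [R_zero_zero_union_R_one_zero, Set.mem_Ici]; exact_mod_cast hn
    rcases this with ⟨m, hm, hmn⟩ | ⟨m, hm, hmn⟩
    · rw [fij_zero_zero, Nat.cast_inj] at hmn
      exact Or.inl ⟨m, hm, hmn ▸ (fij_wa i j hm).symm⟩
    · rw [fij_one_zero] at hmn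
      obtain rfl : wa m + m = n := by exact_mod_cast hmn
      exact Or.inr ⟨m, hm, (fij_wa_add_self i j hm).symm⟩
  · rintro (⟨m, hm, rfl⟩ | ⟨m, hm, rfl⟩)
    · exact ⟨wa m, wa_pos hm, fij_wa i j hm⟩
    · exact ⟨wa m + m, by omega, fij_wa_add_self i j hm⟩

theorem disjoint_R (i : ℕ) (j : ℤ) : Disjoint (R (i + 1) (j + fib (i + 1))) (R (i + 2) j) := by
  rw [Set.disjoint_left]
  rintro _ ⟨m, hm, rfl⟩ ⟨m', hm', h⟩
  rw [← fij_wa i j hm, ← fij_wa_add_self i j hm'] at h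
  have h' : (wa m' + m' : ℤ) = wa m := by exact_mod_cast (fij_strictMono i j).injective h
  refine Set.disjoint_left.1 disjoint_R_zero_zero_R_one_zero ⟨m, hm, fij_zero_zero m⟩ ?_
  exact ⟨m', hm', (fij_one_zero m').trans h'⟩

theorem sub_mem_R_iff (i : ℕ) (j c x : ℤ) : x - c ∈ R i j ↔ x ∈ R i (j - c) := by
  simp only [R, fij, Set.mem_ofPred_eq]
  exact exists_congr fun n => and_congr_right fun _ => by constructor <;> intro h <;> linarith

theorem indicator_R_sub (i : ℕ) (j c x : ℤ) :
    (R i j).indicator (1 : ℤ → ℕ) (x - c) = (R i (j - c)).indicator 1 x := by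
  by_cases h : x - c ∈ R i j
  · rw [Set.indicator_of_mem h, Set.indicator_of_mem ((sub_mem_R_iff i j c x).1 h)]
    rfl
  · rw [Set.indicator_of_notMem h, Set.indicator_of_notMem (mt (sub_mem_R_iff i j c x).2 h)]

noncomputable def rowCount (i : ℕ) (lo hi x : ℤ) : ℕ := ∑ j ∈ Ioc lo hi, (R i j).indicator 1 x

theorem rowCount_sub (i : ℕ) (lo hi x c : ℤ) :
    rowCount i lo hi (x - c) = rowCount i (lo - c) (hi - c) x := by
  simp only [rowCount, indicator_R_sub]
  simp only [sub_eq_add_neg _ c]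
  exact sum_Ioc_add (fun j => (R i j).indicator (1 : ℤ → ℕ) x) lo hi (-c)

theorem rowCount_eq_add (i : ℕ) (lo hi x : ℤ) :
    rowCount i lo hi x =
      rowCount (i + 1) (lo + fib (i + 1)) (hi + fib (i + 1)) x + rowCount (i + 2) lo hi x := by
  simp only [rowCount, ← sum_Ioc_add, ← sum_add_distrib]
  refine sum_congr rfl fun j _ => ?_
  rw [R_eq_union, Set.indicator_union_of_disjoint (disjoint_R i j)]

theorem rowCount_add_rowCount {i : ℕ} {lo mid hi : ℤ} (h₁ : lo ≤ mid) (h₂ : mid ≤ hi) (x : ℤ) :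
    rowCount i lo mid x + rowCount i mid hi x = rowCount i lo hi x := by
  rw [rowCount, rowCount, ← sum_union (Ioc_disjoint_Ioc_of_le le_rfl), Ioc_union_Ioc_eq_Ioc h₁ h₂,
    rowCount]

noncomputable def levelCount (a : ℕ) (x : ℤ) : ℕ :=
  rowCount a (-fib (a + 3)) (-fib (a + 1)) x + rowCount (a + 1) (-fib (a + 3)) (-fib (a + 2)) x

theorem levelCount_zero (x : ℤ) : levelCount 0 x = (Set.Ici 2).indicator 1 x := by
  have hrow (i : ℕ) : rowCount i (-2) (-1) x = (R i 0).indicator 1 (x - 1) := by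
    rw [indicator_R_sub, zero_sub, rowCount, show Ioc (-2 : ℤ) (-1) = {-1} by decide,
      sum_singleton]
  change rowCount 0 (-2) (-1) x + rowCount 1 (-2) (-1) x = _
  have hsplit := congrFun (Set.indicator_union_of_disjoint disjoint_R_zero_zero_R_one_zero
    (1 : ℤ → ℕ)) (x - 1)
  rw [hrow, hrow, ← hsplit, R_zero_zero_union_R_one_zero]
  exact indicator_Ici_sub 1 1 x

theorem levelCount_succ (a : ℕ) (x : ℤ) :
    levelCount (a + 1) x = levelCount a (x - fib (a + 2)) := by
  have h₃ : (fib (a + 3) : ℤ) = fib (a + 1) + fib (a + 2) := by exact_mod_cast fib_add_two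
  have h₄ : (fib (a + 4) : ℤ) = fib (a + 2) + fib (a + 3) := by exact_mod_cast fib_add_two
  calc levelCount (a + 1) x
      = rowCount (a + 1) (-(2 * fib (a + 2))) (-fib (a + 2)) x
        + rowCount (a + 2) (-fib (a + 4)) (-fib (a + 3)) x
        + rowCount (a + 1) (-fib (a + 4)) (-(2 * fib (a + 2))) x := by
        change rowCount (a + 1) (-fib (a + 4)) (-fib (a + 2)) x
          + rowCount (a + 2) (-fib (a + 4)) (-fib (a + 3)) x = _
        rw [← rowCount_add_rowCount (mid := -(2 * fib (a + 2))) (by omega) (by omega)]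
        ring
    _ = levelCount a (x - fib (a + 2)) := by
        rw [levelCount, rowCount_sub, rowCount_sub, rowCount_eq_add a]
        congr 3 <;> omega

theorem levelCount_eq (a : ℕ) (x : ℤ) :
    levelCount a x = (Set.Ici (fib (a + 3) : ℤ)).indicator 1 x := by
  induction a generalizing x with
  | zero => exact levelCount_zero x
  | succ a ih =>
    have h₄ : (fib (a + 4) : ℤ) = fib (a + 3) + fib (a + 2) := by
      exact_mod_cast (fib_add_two.trans (add_comm _ _))
    rw [levelCount_succ, ih, indicator_Ici_sub, ← h₄]

noncomputable def idxFinset (a : ℕ) : Finset (ℕ × ℤ) :=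
  {a} ×ˢ Ioc (-fib (a + 3) : ℤ) (-fib (a + 1)) ∪ {a + 1} ×ˢ Ioc (-fib (a + 3) : ℤ) (-fib (a + 2))

theorem coe_idxFinset (a : ℕ) : (idxFinset a : Set (ℕ × ℤ)) = IdxSecond (a + 3) := by
  ext ⟨i, j⟩
  simp only [idxFinset, IdxSecond, coe_union, coe_product, coe_singleton, coe_Ioc,
    Set.mem_union, Set.mem_prod, Set.mem_singleton_iff, Set.mem_Ioc, Set.mem_ofPred_eq]
  constructor
  · rintro (⟨rfl, h₁, h₂⟩ | ⟨rfl, h₁, h₂⟩)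
    · omega
    · exact ⟨by omega, by omega, by omega, h₂⟩
  · rintro ⟨h₁, h₂, h₃, h₄⟩
    obtain rfl | rfl : i = a ∨ i = a + 1 := by omega
    · omega
    · exact Or.inr ⟨rfl, by omega, h₄⟩

theorem sum_indicator_idxFinset (a : ℕ) (x : ℤ) :
    ∑ p ∈ idxFinset a, (R p.1 p.2).indicator 1 x = levelCount a x := by
  rw [idxFinset, sum_union (disjoint_product.2 (Or.inl (by simp))), sum_product, sum_product,
    sum_singleton, sum_singleton, levelCount, rowCount, rowCount]

theorem stmt_6 (k : ℕ) (hk : 3 ≤ k) :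
    (∀ p ∈ IdxSecond k, ∀ q ∈ IdxSecond k, p ≠ q → R p.1 p.2 ∩ R q.1 q.2 = ∅) ∧
    (⋃ p ∈ IdxSecond k, R p.1 p.2) = {m : ℤ | (Nat.fib k : ℤ) ≤ m} := by
  obtain ⟨a, rfl⟩ : ∃ a, k = a + 3 := ⟨k - 3, by omega⟩
  obtain ⟨hdisj, hunion⟩ := Finset.pairwiseDisjoint_and_biUnion_eq_of_sum_indicator
    (S := fun p : ℕ × ℤ => R p.1 p.2) fun x =>
      (sum_indicator_idxFinset a x).trans (levelCount_eq a x)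
  rw [coe_idxFinset] at hdisj hunion
  exact ⟨fun p hp q hq hpq => Set.disjoint_iff_inter_eq_empty.1 (hdisj hp hq hpq), hunion⟩
end

section
/- Let j:ℕ→ℕ be defined by j(n)=⌊φn⌋−1 if n∈R_{1,0}, j(n)=⌊(φ−1)n⌋+1 if n∈R_{1,1}, and j(n)=⌊φn⌋+1 if n∈R_{2,0}. Then for every natural number n≥1, the n-fold iterate of j at 3 satisfies jⁿ(3) = F(n+3) + 2. In particular, the permutation j has infinite order. -/
lemma phi_gt : (1.618:ℝ) < phi := by
  unfold phi
  nlinarith [Real.sq_sqrt (by norm_num : (5:ℝ) ≥ 0), Real.sqrt_nonneg 5]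

lemma phi_lt : phi < 1.6181 := by
  unfold phi
  nlinarith [Real.sq_sqrt (by norm_num : (5:ℝ) ≥ 0), Real.sqrt_nonneg 5]

lemma phi_sq : phi ^ 2 = phi + 1 := by
  unfold phi
  have := Real.sq_sqrt (by norm_num : (5:ℝ) ≥ 0)
  ring_nf
  nlinarith [this]

lemma fib_phi : ∀ k : ℕ, (Nat.fib k : ℝ) * phi = Nat.fib (k+1) - (1-phi)^k := by
  have step : ∀ k : ℕ, (Nat.fib k : ℝ) * phi = Nat.fib (k+1) - (1-phi)^k →
      (Nat.fib (k+1) : ℝ) * phi = Nat.fib (k+2) - (1-phi)^(k+1) →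
      (Nat.fib (k+2) : ℝ) * phi = Nat.fib (k+3) - (1-phi)^(k+2) := by
    intro k h1 h2
    have hf : (Nat.fib (k+2) : ℝ) = Nat.fib k + Nat.fib (k+1) := by
      rw [Nat.fib_add_two]; push_cast; ring
    have hf3 : (Nat.fib (k+3) : ℝ) = Nat.fib (k+1) + Nat.fib (k+2) := by
      rw [show k+3 = (k+1)+2 by ring, Nat.fib_add_two]; push_cast; ring
    have hpsi : (1-phi)^(k+2) = (1-phi)^k + (1-phi)^(k+1) := by
      have : (1-phi)^2 = 1 + (1-phi) := by nlinarith [phi_sq]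
      calc (1-phi)^(k+2) = (1-phi)^k * (1-phi)^2 := by ring
        _ = (1-phi)^k * (1 + (1-phi)) := by rw [this]
        _ = (1-phi)^k + (1-phi)^(k+1) := by ring
    rw [hf, hf3, hpsi]
    nlinarith [h1, h2]
  intro k
  induction k using Nat.twoStepInduction with
  | zero => simp
  | one => simp [Nat.fib_one]
  | more n ih1 ih2 => exact step n ih1 ih2

lemma psi_le2 (m : ℕ) (h : 2 ≤ m) : (1-phi)^m ≤ (phi-1)^2 := by
  have hx0 : (0:ℝ) < phi - 1 := by nlinarith [phi_gt]
  have hx1 : phi - 1 ≤ 1 := by nlinarith [phi_lt]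
  have hrw : (1-phi) = -(phi-1) := by ring
  rcases Nat.even_or_odd m with he | ho
  · rw [hrw, he.neg_pow]
    exact pow_le_pow_of_le_one hx0.le hx1 h
  · rw [hrw, ho.neg_pow]
    nlinarith [pow_pos hx0 m, pow_pos hx0 2]

lemma psi_le4 (m : ℕ) (h : 4 ≤ m) : (1-phi)^m ≤ (phi-1)^4 := by
  have hx0 : (0:ℝ) < phi - 1 := by nlinarith [phi_gt]
  have hx1 : phi - 1 ≤ 1 := by nlinarith [phi_lt]
  have hrw : (1-phi) = -(phi-1) := by ring
  rcases Nat.even_or_odd m with he | ho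
  · rw [hrw, he.neg_pow]
    exact pow_le_pow_of_le_one hx0.le hx1 h
  · rw [hrw, ho.neg_pow]
    nlinarith [pow_pos hx0 m, pow_pos hx0 4]

lemma psi_ge (m : ℕ) (h : 2 ≤ m) : -(phi-1)^3 ≤ (1-phi)^m := by
  have hx0 : (0:ℝ) < phi - 1 := by nlinarith [phi_gt]
  have hx1 : phi - 1 ≤ 1 := by nlinarith [phi_lt]
  have hrw : (1-phi) = -(phi-1) := by ring
  rcases Nat.even_or_odd m with he | ho
  · rw [hrw, he.neg_pow]
    nlinarith [pow_pos hx0 m, pow_pos hx0 3]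
  · rw [hrw, ho.neg_pow]
    have h3 : 3 ≤ m := by
      rcases ho with ⟨t, rfl⟩; omega
    have := pow_le_pow_of_le_one hx0.le hx1 h3
    linarith

lemma wa_eq (n m : ℕ) (h1 : (m:ℝ) ≤ n * phi) (h2 : (n:ℝ) * phi < m + 1) : wa n = m := by
  rw [wa, Nat.floor_eq_iff (le_trans (Nat.cast_nonneg m) h1)]
  exact ⟨h1, h2⟩

lemma wa_ge (n m : ℕ) (h1 : (m:ℝ) ≤ n * phi) : m ≤ wa n :=
  Nat.le_floor h1


lemma x4_lt : (phi-1)^4 < 0.15 := by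
  have h : (phi-1)^4 < 0.6181^4 := by
    apply pow_lt_pow_left₀ (by nlinarith [phi_lt]) (by nlinarith [phi_gt]) (by norm_num)
  nlinarith [h]

lemma x3_lt : (phi-1)^3 < 0.24 := by
  have h : (phi-1)^3 < 0.6181^3 := by
    apply pow_lt_pow_left₀ (by nlinarith [phi_lt]) (by nlinarith [phi_gt]) (by norm_num)
  nlinarith [h]

lemma x2_lt : (phi-1)^2 < 0.39 := by nlinarith [phi_gt, phi_lt]

lemma waA (k : ℕ) : wa (Nat.fib (k+4) + 2) = Nat.fib (k+5) + 3 := by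
  have hf := fib_phi (k+4)
  have hle := psi_le4 (k+4) (by omega)
  have hge := psi_ge (k+4) (by omega)
  apply wa_eq
  · push_cast
    rw [show ((Nat.fib (k+4) : ℝ) + 2) * phi = (Nat.fib (k+4) : ℝ) * phi + 2 * phi by ring, hf]
    have : k+4+1 = k+5 := rfl
    rw [this]
    nlinarith [phi_gt, phi_lt, x4_lt, x3_lt, x2_lt]
  · push_cast
    rw [show ((Nat.fib (k+4) : ℝ) + 2) * phi = (Nat.fib (k+4) : ℝ) * phi + 2 * phi by ring, hf]
    have : k+4+1 = k+5 := rfl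
    rw [this]
    nlinarith [phi_gt, phi_lt, x4_lt, x3_lt, x2_lt]

lemma waB (k : ℕ) : wa (Nat.fib (k+2) + 1) = Nat.fib (k+3) + 1 := by
  have hf := fib_phi (k+2)
  have hle := psi_le2 (k+2) (by omega)
  have hge := psi_ge (k+2) (by omega)
  apply wa_eq
  · push_cast
    rw [show ((Nat.fib (k+2) : ℝ) + 1) * phi = (Nat.fib (k+2) : ℝ) * phi + phi by ring, hf]
    have : k+2+1 = k+3 := rfl
    rw [this]
    nlinarith [phi_gt, phi_lt, x4_lt, x3_lt, x2_lt]
  · push_cast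
    rw [show ((Nat.fib (k+2) : ℝ) + 1) * phi = (Nat.fib (k+2) : ℝ) * phi + phi by ring, hf]
    have : k+2+1 = k+3 := rfl
    rw [this]
    nlinarith [phi_gt, phi_lt, x4_lt, x3_lt, x2_lt]

open scoped Classical in
/-- j(n) = ⌊φn⌋−1 if n ∈ R_{1,0}, ⌊(φ−1)n⌋+1 if n ∈ R_{1,1}, ⌊φn⌋+1 if n ∈ R_{2,0}. -/
noncomputable def jmap (n : ℕ) : ℕ :=
  if (n : ℤ) ∈ R 1 0 then wa n - 1
  else if (n : ℤ) ∈ R 1 1 then ⌊(phi - 1) * (n : ℝ)⌋₊ + 1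
  else wa n + 1

lemma fij10 (n : ℕ) : fij 1 0 n = (wa n : ℤ) + n := by
  simp [fij]

lemma fij11 (n : ℕ) : fij 1 1 n = (wa n : ℤ) + n - 1 := by
  simp [fij]

lemma wa1 : wa 1 = 1 := by
  apply wa_eq <;> push_cast <;> nlinarith [phi_gt, phi_lt]

lemma wa2 : wa 2 = 3 := by
  apply wa_eq <;> push_cast <;> nlinarith [phi_gt, phi_lt]

lemma wa3 : wa 3 = 4 := by
  apply wa_eq <;> push_cast <;> nlinarith [phi_gt, phi_lt]

lemma wa_big (n : ℕ) : 4 ≤ wa (n+3) := by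
  apply wa_ge
  push_cast
  nlinarith [phi_gt, Nat.cast_nonneg (α := ℝ) n]

lemma jmap3 : jmap 3 = 5 := by
  have h1 : ((3:ℕ) : ℤ) ∉ R 1 0 := by
    rintro ⟨n, hn, hfn⟩
    rw [fij10] at hfn
    match n, hn with
    | 1, _ => rw [wa1] at hfn; norm_num at hfn
    | 2, _ => rw [wa2] at hfn; norm_num at hfn
    | (m+3), _ =>
      have := wa_big m
      omega
  have h2 : ((3:ℕ) : ℤ) ∉ R 1 1 := by
    rintro ⟨n, hn, hfn⟩
    rw [fij11] at hfn
    match n, hn with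
    | 1, _ => rw [wa1] at hfn; norm_num at hfn
    | 2, _ => rw [wa2] at hfn; norm_num at hfn
    | (m+3), _ =>
      have := wa_big m
      omega
  rw [jmap, if_neg h1, if_neg h2, wa3]

lemma jmap_fib (k : ℕ) : jmap (Nat.fib (k+4) + 2) = Nat.fib (k+5) + 2 := by
  have hmem : ((Nat.fib (k+4) + 2 : ℕ) : ℤ) ∈ R 1 0 := by
    refine ⟨Nat.fib (k+2) + 1, by omega, ?_⟩
    rw [fij10, waB k]
    have : Nat.fib (k+4) = Nat.fib (k+2) + Nat.fib (k+3) := Nat.fib_add_two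
    push_cast [this]
    ring
  rw [jmap, if_pos hmem, waA k]
  omega

theorem stmt_13 :
    (∀ n : ℕ, 1 ≤ n → jmap^[n] 3 = Nat.fib (n + 3) + 2) ∧
    (∀ m : ℕ, 0 < m → jmap^[m] ≠ id) := by
  have main : ∀ n : ℕ, 1 ≤ n → jmap^[n] 3 = Nat.fib (n + 3) + 2 := by
    intro n hn
    induction n, hn using Nat.le_induction with
    | base =>
      rw [Function.iterate_one, jmap3]
      rfl
    | succ n hn ih =>
      obtain ⟨m, rfl⟩ : ∃ m, n = m + 1 := ⟨n - 1, by omega⟩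
      rw [Function.iterate_succ_apply', ih]
      have : m + 1 + 3 = m + 4 := by ring
      rw [this, jmap_fib m]
  refine ⟨main, fun m hm hid => ?_⟩
  have h1 := main m hm
  rw [hid] at h1
  simp at h1
  have : 3 ≤ Nat.fib (m + 3) := by
    calc 3 = Nat.fib 4 := rfl
    _ ≤ Nat.fib (m + 3) := Nat.fib_mono (by omega)
  omega
end
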